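/- arXiv:2405.16213 — 4 statements merged into one kernel-verified Lean document; each statement's English description precedes it below -/
import Mathlib

section
/- Let Y ∈ ℝ^{c×n} have rank c with SVD Y = U_Y Σ_Y V_Yᵀ where V_Y ∈ St_c(ℝⁿ), and let X ∈ ℝ^{c×n} have rank c with fixed singular value matrix Σ_X (singular values σ₁ ≥ … ≥ σ_c) and fixed left singular vectors U_X. Then the minimum over V_X ∈ St_c(ℝⁿ) of the nuclear norm of the stacked matrix [Y ; U_X Σ_X V_Xᵀ] is attained at V_X = V_Y, and the minimum value equals Σ_{i=1}^{c} √(μ_i² + σ_i²), where μ₁ ≥ … ≥ μ_c are the singular values of Y. -/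
/-!
The Gram matrix of `[Y ; U_X Σ_X V_Xᵀ]` is `H = V_Y Σ_Y² V_Yᵀ + V_X Σ_X² V_Xᵀ`, and the nuclear
norm is `∑ √λᵢ(H)`. The `k` largest eigenvalues of `H` sum to the trace of a compression
`Wᵀ H W` with `k` orthonormal columns (Ky Fan), and each summand `Wᵀ V diag(d) Vᵀ W` has trace at
most `d₁ + ⋯ + d_k`. As the traces agree, the eigenvalues of `H` are majorized by `(μᵢ² + σᵢ²)`
padded with zeros, and Karamata's inequality for the concave `√` gives the lower bound. For
`V_X = V_Y` the Gram matrix is `V_Y diag(μ² + σ²) V_Yᵀ`, whose square root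
`V_Y diag(√(μ² + σ²)) V_Yᵀ` has trace exactly `∑ √(μᵢ² + σᵢ²)`.
-/

open Matrix

/-- The nuclear norm of a real matrix: the sum of its singular values. -/
noncomputable def nuclearNorm {m n : Type*} [Fintype m] [Fintype n] [DecidableEq n]
    (A : Matrix m n ℝ) : ℝ :=
  ∑ i, Real.sqrt ((Matrix.isHermitian_conjTranspose_mul_self A).eigenvalues i)

open Finset Filter Topology

theorem sum_range_mul_nonneg_of_monotone {n : ℕ} {w z : ℕ → ℝ} (hw : Monotone w)
    (hz : ∀ k ≤ n, ∑ i ∈ range k, z i ≤ 0) (htot : ∑ i ∈ range n, z i = 0) :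
    0 ≤ ∑ i ∈ range n, w i * z i := by
  have hparts := sum_range_by_parts w z n
  simp only [smul_eq_mul] at hparts
  rw [hparts, htot, mul_zero, zero_sub, le_neg, neg_zero]
  refine sum_nonpos fun i hi => mul_nonpos_of_nonneg_of_nonpos (sub_nonneg.2 (hw i.le_succ)) ?_
  exact hz _ (by rw [mem_range] at hi; omega)

theorem sum_sqrt_le_of_majorized_of_pos {n : ℕ} {x y : ℕ → ℝ} (hx : Antitone x)
    (hy : Antitone y) (hx0 : ∀ i, 0 < x i) (hy0 : ∀ i, 0 < y i)
    (hmaj : ∀ k ≤ n, ∑ i ∈ range k, x i ≤ ∑ i ∈ range k, y i)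
    (htot : ∑ i ∈ range n, x i = ∑ i ∈ range n, y i) :
    ∑ i ∈ range n, √(y i) ≤ ∑ i ∈ range n, √(x i) := by
  set w : ℕ → ℝ := fun i => (√(x i) + √(y i))⁻¹
  have hw : Monotone w := fun i j hij => by
    have hpos : 0 < √(x j) + √(y j) := by have := hx0 j; positivity
    exact inv_anti₀ hpos (add_le_add (Real.sqrt_le_sqrt (hx hij)) (Real.sqrt_le_sqrt (hy hij)))
  have hchord : ∀ i, √(x i) - √(y i) = w i * (x i - y i) := fun i => by
    have hpos : 0 < √(x i) + √(y i) := by have := hx0 i; positivity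
    simp only [w]
    field_simp
    nlinarith [Real.sq_sqrt (hx0 i).le, Real.sq_sqrt (hy0 i).le]
  rw [← sub_nonneg, ← sum_sub_distrib, sum_congr rfl fun i _ => hchord i]
  exact sum_range_mul_nonneg_of_monotone hw
    (fun k hk => by simpa [sum_sub_distrib] using hmaj k hk) (by simp [sum_sub_distrib, htot])

-- Karamata's inequality for `√`. The shift by `ε` keeps the chord slopes `(√xᵢ + √yᵢ)⁻¹` finite.
theorem sum_sqrt_le_of_majorized {n : ℕ} {x y : ℕ → ℝ} (hx : Antitone x)
    (hy : Antitone y) (hx0 : ∀ i, 0 ≤ x i) (hy0 : ∀ i, 0 ≤ y i)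
    (hmaj : ∀ k ≤ n, ∑ i ∈ range k, x i ≤ ∑ i ∈ range k, y i)
    (htot : ∑ i ∈ range n, x i = ∑ i ∈ range n, y i) :
    ∑ i ∈ range n, √(y i) ≤ ∑ i ∈ range n, √(x i) := by
  have hshift : ∀ ε > 0, ∑ i ∈ range n, √(y i + ε) ≤ ∑ i ∈ range n, √(x i + ε) := fun ε hε =>
    sum_sqrt_le_of_majorized_of_pos (fun i j h => by simpa using hx h)
      (fun i j h => by simpa using hy h) (fun i => by linarith [hx0 i])
      (fun i => by linarith [hy0 i]) (fun k hk => by simpa [sum_add_distrib] using hmaj k hk)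
      (by simp [sum_add_distrib, htot])
  have hlim : ∀ u : ℕ → ℝ, Tendsto (fun ε => ∑ i ∈ range n, √(u i + ε)) (𝓝[>] 0)
      (𝓝 (∑ i ∈ range n, √(u i))) := fun u => by
    have : Continuous fun ε => ∑ i ∈ range n, √(u i + ε) := by fun_prop
    simpa using (this.tendsto 0).mono_left nhdsWithin_le_nhds
  exact le_of_tendsto_of_tendsto (hlim y) (hlim x) (eventually_nhdsWithin_of_forall hshift)

theorem sum_range_mul_le_sum_range_of_antitone {N k : ℕ} {d t : ℕ → ℝ} (hd : Antitone d)
    (hd0 : ∀ i, 0 ≤ d i) (ht0 : ∀ i < N, 0 ≤ t i) (ht1 : ∀ i < N, t i ≤ 1)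
    (hts : ∑ i ∈ range N, t i ≤ k) :
    ∑ i ∈ range N, d i * t i ≤ ∑ i ∈ range k, d i := by
  set θ := d k
  have hterm : ∀ i < N, d i * t i ≤ θ * t i + if i < k then d i - θ else 0 := fun i hiN => by
    split_ifs with hi
    · nlinarith [hd hi.le, ht1 i hiN]
    · nlinarith [hd (not_lt.1 hi), ht0 i hiN]
  calc ∑ i ∈ range N, d i * t i
      ≤ θ * ∑ i ∈ range N, t i + ∑ i ∈ range N with i < k, (d i - θ) := by
        rw [mul_sum, sum_filter, ← sum_add_distrib]
        exact sum_le_sum fun i hi => hterm i (mem_range.1 hi)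
    _ ≤ θ * k + ∑ i ∈ range k, (d i - θ) := by
        refine add_le_add (mul_le_mul_of_nonneg_left hts (hd0 k))
          (sum_le_sum_of_subset_of_nonneg (fun i hi => ?_) fun i hi _ => ?_)
        · simp only [mem_filter, mem_range] at hi ⊢
          exact hi.2
        · exact sub_nonneg.2 (hd (mem_range.1 hi).le)
    _ = ∑ i ∈ range k, d i := by simp [sum_sub_distrib]; ring

namespace Fin

variable {α β : Type*} {c : ℕ}

theorem extend_val_apply [Zero α] (d : Fin c → α) (i : Fin c) :
    Function.extend Fin.val d 0 i = d i :=
  Fin.val_injective.extend_apply d 0 i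

theorem extend_val_of_le [Zero α] (d : Fin c → α) {i : ℕ} (hi : c ≤ i) :
    Function.extend Fin.val d 0 i = 0 :=
  Function.extend_apply' _ _ _ (by rintro ⟨j, rfl⟩; omega)

theorem extend_val_add [AddZeroClass α] (d₁ d₂ : Fin c → α) :
    Function.extend Fin.val (d₁ + d₂) 0 =
      Function.extend Fin.val d₁ 0 + Function.extend Fin.val d₂ 0 := by
  funext i
  by_cases hi : i < c
  · simp only [Pi.add_apply, extend_val_apply _ ⟨i, hi⟩]
  · simp only [Pi.add_apply, extend_val_of_le _ (not_lt.1 hi), add_zero]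

theorem extend_val_nonneg [Zero α] [Preorder α] {d : Fin c → α} (hd0 : ∀ i, 0 ≤ d i)
    (i : ℕ) : 0 ≤ Function.extend Fin.val d 0 i := by
  by_cases hi : i < c
  · exact (extend_val_apply d ⟨i, hi⟩).symm ▸ hd0 _
  · rw [extend_val_of_le d (not_lt.1 hi)]

theorem antitone_extend_val [Zero α] [Preorder α] {d : Fin c → α} (hd : Antitone d)
    (hd0 : ∀ i, 0 ≤ d i) : Antitone (Function.extend Fin.val d 0) := by
  intro i j hij
  by_cases hj : j < c
  · rw [extend_val_apply d ⟨j, hj⟩, extend_val_apply d ⟨i, hij.trans_lt hj⟩]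
    exact hd hij
  · rw [extend_val_of_le d (not_lt.1 hj)]
    exact extend_val_nonneg hd0 i

theorem sum_range_comp_extend_val [Zero α] [AddCommMonoid β] {F : α → β} (hF : F 0 = 0)
    (d : Fin c → α) {N : ℕ} (hN : c ≤ N) :
    ∑ i ∈ range N, F (Function.extend Fin.val d 0 i) = ∑ i, F (d i) := by
  rw [← sum_range_add_sum_Ico _ hN, ← Fin.sum_univ_eq_sum_range,
    sum_eq_zero (s := Ico c N) fun i hi => by rw [extend_val_of_le d (mem_Ico.1 hi).1, hF]]
  simp only [extend_val_apply, add_zero]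

theorem sum_range_extend_val [AddCommMonoid α] (d : Fin c → α) {N : ℕ} (hN : c ≤ N) :
    ∑ i ∈ range N, Function.extend Fin.val d 0 i = ∑ i, d i :=
  sum_range_comp_extend_val (F := id) rfl d hN

end Fin

namespace Matrix

theorem card_le_card_of_transpose_mul_self_eq_one {m ι R : Type*} [Fintype m] [Fintype ι]
    [DecidableEq ι] [CommRing R] [StrongRankCondition R] {V : Matrix m ι R}
    (hV : Vᵀ * V = 1) : Fintype.card ι ≤ Fintype.card m :=
  calc Fintype.card ι = (Vᵀ * V).rank := by rw [hV, rank_one]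
    _ ≤ V.rank := rank_mul_le_right _ _
    _ ≤ Fintype.card m := rank_le_card_height V

theorem trace_mul_diagonal_mul_transpose {m ι : Type*} [Fintype m] [Fintype ι] [DecidableEq ι]
    {V : Matrix m ι ℝ} (hV : Vᵀ * V = 1) (d : ι → ℝ) :
    (V * diagonal d * Vᵀ).trace = ∑ i, d i := by
  rw [trace_mul_cycle, hV, Matrix.one_mul, trace_diagonal]

theorem posSemidef_mul_diagonal_mul_transpose {m ι : Type*} [Fintype m] [Fintype ι]
    [DecidableEq ι] (V : Matrix m ι ℝ) {d : ι → ℝ} (hd0 : ∀ i, 0 ≤ d i) :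
    (V * diagonal d * Vᵀ).PosSemidef := by
  simpa only [conjTranspose_eq_transpose_of_trivial] using
    (PosSemidef.diagonal hd0).mul_mul_conjTranspose_same V

theorem transpose_mul_self_mul_diagonal_mul_transpose {m n ι : Type*} [Fintype m] [Fintype ι]
    [DecidableEq ι] {U : Matrix m ι ℝ} (hU : Uᵀ * U = 1) (d : ι → ℝ) (V : Matrix n ι ℝ) :
    (U * diagonal d * Vᵀ)ᵀ * (U * diagonal d * Vᵀ) = V * diagonal (fun i => d i ^ 2) * Vᵀ := by
  calc (U * diagonal d * Vᵀ)ᵀ * (U * diagonal d * Vᵀ)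
      = V * (diagonal d * (Uᵀ * U) * diagonal d) * Vᵀ := by
        simp only [transpose_mul, transpose_transpose, diagonal_transpose, Matrix.mul_assoc]
    _ = V * diagonal (fun i => d i ^ 2) * Vᵀ := by
        simp only [hU, Matrix.mul_one, diagonal_mul_diagonal, sq]

theorem diag_mul_transpose_le_one_of_transpose_mul_self_eq_one {m ι κ : Type*} [Fintype m]
    [Fintype ι] [Fintype κ] [DecidableEq m] [DecidableEq ι] [DecidableEq κ]
    {V : Matrix m ι ℝ} {W : Matrix m κ ℝ} (hV : Vᵀ * V = 1) (hW : Wᵀ * W = 1) (j : ι) :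
    (Vᵀ * W * (Vᵀ * W)ᵀ) j j ≤ 1 := by
  have hproj : (1 - W * Wᵀ)ᵀ * (1 - W * Wᵀ) = 1 - W * Wᵀ := by
    simp only [transpose_sub, transpose_one, transpose_mul, transpose_transpose, Matrix.sub_mul,
      Matrix.mul_sub, Matrix.one_mul, Matrix.mul_one, Matrix.mul_assoc, ← Matrix.mul_assoc Wᵀ W,
      hW]
    abel
  have hpsd : (Vᵀ * (1 - W * Wᵀ) * V).PosSemidef := by
    have := (posSemidef_conjTranspose_mul_self (1 - W * Wᵀ)).conjTranspose_mul_mul_same V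
    simpa only [conjTranspose_eq_transpose_of_trivial, hproj] using this
  have hdiag := hpsd.diag_nonneg (i := j)
  rw [Matrix.mul_sub, Matrix.sub_mul, Matrix.mul_one, hV] at hdiag
  simpa [transpose_mul, Matrix.mul_assoc] using hdiag

theorem trace_transpose_mul_mul_diagonal_mul_transpose_mul_le {m ι : Type*} [Fintype m]
    [Fintype ι] [DecidableEq m] [DecidableEq ι] {c : ℕ} {V : Matrix m (Fin c) ℝ}
    {W : Matrix m ι ℝ} (hV : Vᵀ * V = 1) (hW : Wᵀ * W = 1) {d : Fin c → ℝ} (hd : Antitone d)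
    (hd0 : ∀ j, 0 ≤ d j) :
    (Wᵀ * (V * diagonal d * Vᵀ) * W).trace ≤
      ∑ i ∈ range (Fintype.card ι), Function.extend Fin.val d 0 i := by
  set G := Vᵀ * W
  set t : Fin c → ℝ := fun j => (G * Gᵀ) j j
  have htrace : (Wᵀ * (V * diagonal d * Vᵀ) * W).trace = ∑ j, d j * t j := by
    rw [show Wᵀ * (V * diagonal d * Vᵀ) * W = Gᵀ * (diagonal d * G) by
      simp only [G, transpose_mul, transpose_transpose, Matrix.mul_assoc], trace_mul_comm,
      Matrix.mul_assoc]
    simp [trace, t]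
  have ht0 : ∀ j, 0 ≤ t j := fun j => by
    simpa [conjTranspose_eq_transpose_of_trivial] using
      (posSemidef_self_mul_conjTranspose G).diag_nonneg (i := j)
  have hts : ∑ j, t j ≤ Fintype.card ι :=
    calc ∑ j, t j = (Gᵀ * G).trace := by rw [← trace_mul_comm]; rfl
      _ = ∑ l, (Wᵀ * V * (Wᵀ * V)ᵀ) l l := by simp [G, trace, transpose_mul]
      _ ≤ ∑ _l : ι, (1 : ℝ) := sum_le_sum fun l _ =>
          diag_mul_transpose_le_one_of_transpose_mul_self_eq_one hW hV l
      _ = Fintype.card ι := by simp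
  have hpad : ∑ j, d j * t j =
      ∑ i ∈ range c, Function.extend Fin.val d 0 i * Function.extend Fin.val t 0 i := by
    simp [← Fin.sum_univ_eq_sum_range, Fin.extend_val_apply]
  rw [htrace, hpad]
  refine sum_range_mul_le_sum_range_of_antitone (Fin.antitone_extend_val hd hd0)
    (Fin.extend_val_nonneg hd0) (fun i hi => ?_) (fun i hi => ?_) ?_
  · rw [Fin.extend_val_apply t ⟨i, hi⟩]
    exact ht0 _
  · rw [Fin.extend_val_apply t ⟨i, hi⟩]
    exact diag_mul_transpose_le_one_of_transpose_mul_self_eq_one hV hW _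
  · rwa [Fin.sum_range_extend_val t le_rfl]

namespace IsHermitian

variable {n : Type*} [Fintype n] [DecidableEq n] {H : Matrix n n ℝ} (hH : H.IsHermitian)

theorem sum_comp_eigenvalues_eq_sum_comp_eigenvalues₀ {β : Type*} [AddCommMonoid β]
    (f : ℝ → β) : ∑ i, f (hH.eigenvalues i) = ∑ i, f (hH.eigenvalues₀ i) :=
  Equiv.sum_comp (Fintype.equivOfCardEq (Fintype.card_fin _)).symm (f ∘ hH.eigenvalues₀)

theorem exists_trace_eq_sum_range_eigenvalues₀ {k : ℕ} (hk : k ≤ Fintype.card n) :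
    ∃ W : Matrix n (Fin k) ℝ, Wᵀ * W = 1 ∧
      (Wᵀ * H * W).trace = ∑ i ∈ range k, Function.extend Fin.val hH.eigenvalues₀ 0 i := by
  set U : Matrix n n ℝ := ↑hH.eigenvectorUnitary
  set e := Fintype.equivOfCardEq (Fintype.card_fin (Fintype.card n))
  set f : Fin k ↪ n := (Fin.castLEEmb hk).trans e.toEmbedding
  have hUU : Uᵀ * U = 1 := by
    simpa only [U, star_eq_conjTranspose, conjTranspose_eq_transpose_of_trivial] using
      Unitary.coe_star_mul_self hH.eigenvectorUnitary
  have hUHU : Uᵀ * H * U = diagonal hH.eigenvalues := by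
    simpa [U, star_eq_conjTranspose, conjTranspose_eq_transpose_of_trivial] using
      hH.conjStarAlgAut_star_eigenvectorUnitary
  have hconj : ∀ M : Matrix n n ℝ,
      (U.submatrix id f)ᵀ * M * U.submatrix id f = (Uᵀ * M * U).submatrix f f := fun M => by
    rw [transpose_submatrix, ← submatrix_id_id M, ← submatrix_mul _ _ _ _ _ Function.bijective_id,
      ← submatrix_mul _ _ _ _ _ Function.bijective_id, submatrix_id_id]
  refine ⟨U.submatrix id f, ?_, ?_⟩
  · simpa [hUU, submatrix_one_embedding] using hconj 1
  · rw [hconj, hUHU, submatrix_diagonal_embedding, trace_diagonal, ← Fin.sum_univ_eq_sum_range]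
    exact sum_congr rfl fun i _ => (congrArg hH.eigenvalues₀ (e.symm_apply_apply _)).trans
      (Fin.extend_val_apply hH.eigenvalues₀ (Fin.castLE hk i)).symm

theorem sum_range_eigenvalues₀_le_of_eq_add {c : ℕ} {V₁ V₂ : Matrix n (Fin c) ℝ}
    (hV₁ : V₁ᵀ * V₁ = 1) (hV₂ : V₂ᵀ * V₂ = 1) {d₁ d₂ : Fin c → ℝ} (hd₁ : Antitone d₁)
    (hd₂ : Antitone d₂) (hd₁0 : ∀ j, 0 ≤ d₁ j) (hd₂0 : ∀ j, 0 ≤ d₂ j)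
    (hH_eq : H = V₁ * diagonal d₁ * V₁ᵀ + V₂ * diagonal d₂ * V₂ᵀ) {k : ℕ}
    (hk : k ≤ Fintype.card n) :
    ∑ i ∈ range k, Function.extend Fin.val hH.eigenvalues₀ 0 i ≤
      ∑ i ∈ range k, Function.extend Fin.val (d₁ + d₂) 0 i := by
  obtain ⟨W, hW, htrace⟩ := hH.exists_trace_eq_sum_range_eigenvalues₀ hk
  have h₁ := trace_transpose_mul_mul_diagonal_mul_transpose_mul_le hV₁ hW hd₁ hd₁0
  have h₂ := trace_transpose_mul_mul_diagonal_mul_transpose_mul_le hV₂ hW hd₂ hd₂0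
  rw [Fintype.card_fin] at h₁ h₂
  rw [← htrace, Fin.extend_val_add, hH_eq, Matrix.mul_add, Matrix.add_mul, trace_add]
  simp only [Pi.add_apply, sum_add_distrib]
  exact add_le_add h₁ h₂

theorem sum_sqrt_add_le_sum_sqrt_eigenvalues {c : ℕ} {V₁ V₂ : Matrix n (Fin c) ℝ}
    (hV₁ : V₁ᵀ * V₁ = 1) (hV₂ : V₂ᵀ * V₂ = 1) {d₁ d₂ : Fin c → ℝ} (hd₁ : Antitone d₁)
    (hd₂ : Antitone d₂) (hd₁0 : ∀ j, 0 ≤ d₁ j) (hd₂0 : ∀ j, 0 ≤ d₂ j)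
    (hH_eq : H = V₁ * diagonal d₁ * V₁ᵀ + V₂ * diagonal d₂ * V₂ᵀ) :
    ∑ j, √(d₁ j + d₂ j) ≤ ∑ i, √(hH.eigenvalues i) := by
  have hc : c ≤ Fintype.card n := by
    simpa using card_le_card_of_transpose_mul_self_eq_one hV₁
  have hd0 : ∀ j, 0 ≤ (d₁ + d₂) j := fun j => add_nonneg (hd₁0 j) (hd₂0 j)
  have hpsd : H.PosSemidef := hH_eq ▸ (posSemidef_mul_diagonal_mul_transpose V₁ hd₁0).add
    (posSemidef_mul_diagonal_mul_transpose V₂ hd₂0)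
  have heig0 : ∀ i, 0 ≤ hH.eigenvalues₀ i := fun i => by
    simpa [eigenvalues] using
      hpsd.eigenvalues_nonneg (Fintype.equivOfCardEq (Fintype.card_fin _) i)
  have htot : ∑ i ∈ range (Fintype.card n), Function.extend Fin.val hH.eigenvalues₀ 0 i =
      ∑ i ∈ range (Fintype.card n), Function.extend Fin.val (d₁ + d₂) 0 i := by
    have htrace : H.trace = ∑ j, (d₁ + d₂) j := by
      rw [hH_eq, trace_add, trace_mul_diagonal_mul_transpose hV₁,
        trace_mul_diagonal_mul_transpose hV₂, ← sum_add_distrib, Pi.add_def]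
    rw [Fin.sum_range_extend_val _ le_rfl, Fin.sum_range_extend_val _ hc, ← htrace]
    simpa [hH.sum_comp_eigenvalues_eq_sum_comp_eigenvalues₀ fun x => x] using
      hH.trace_eq_sum_eigenvalues.symm
  have hkaramata := sum_sqrt_le_of_majorized
    (Fin.antitone_extend_val hH.eigenvalues₀_antitone heig0)
    (Fin.antitone_extend_val (hd₁.add hd₂ : Antitone (d₁ + d₂)) hd0)
    (Fin.extend_val_nonneg heig0) (Fin.extend_val_nonneg hd0)
    (fun k hk => hH.sum_range_eigenvalues₀_le_of_eq_add hV₁ hV₂ hd₁ hd₂ hd₁0 hd₂0 hH_eq hk) htot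
  rwa [Fin.sum_range_comp_extend_val Real.sqrt_zero _ hc,
    Fin.sum_range_comp_extend_val Real.sqrt_zero _ le_rfl,
    ← hH.sum_comp_eigenvalues_eq_sum_comp_eigenvalues₀] at hkaramata

end IsHermitian

open scoped MatrixOrder

theorem PosSemidef.trace_sqrt {n : Type*} [Fintype n] [DecidableEq n] {H : Matrix n n ℝ}
    (hH : H.PosSemidef) : (CFC.sqrt H).trace = ∑ i, √(hH.1.eigenvalues i) := by
  rw [CFC.sqrt_eq_cfc, cfc_nnreal_eq_real _ H, hH.1.cfc_eq, IsHermitian.cfc,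
    Unitary.conjStarAlgAut_apply, trace_mul_cycle, Unitary.coe_star_mul_self, Matrix.one_mul,
    trace_diagonal]
  refine sum_congr rfl fun i _ => ?_
  simp [max_eq_left (hH.eigenvalues_nonneg i)]

theorem sqrt_mul_diagonal_mul_transpose {m ι : Type*} [Fintype m] [Fintype ι] [DecidableEq m]
    [DecidableEq ι] {V : Matrix m ι ℝ} (hV : Vᵀ * V = 1) {d : ι → ℝ} (hd0 : ∀ i, 0 ≤ d i) :
    CFC.sqrt (V * diagonal d * Vᵀ) = V * diagonal (fun i => √(d i)) * Vᵀ := by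
  refine CFC.sqrt_unique ?_
    (posSemidef_mul_diagonal_mul_transpose V fun i => Real.sqrt_nonneg _).nonneg
  calc V * diagonal (fun i => √(d i)) * Vᵀ * (V * diagonal (fun i => √(d i)) * Vᵀ)
      = V * (diagonal (fun i => √(d i)) * (Vᵀ * V) * diagonal (fun i => √(d i))) * Vᵀ := by
        simp only [Matrix.mul_assoc]
    _ = V * diagonal d * Vᵀ := by
        simp only [hV, Matrix.mul_one, diagonal_mul_diagonal, Real.mul_self_sqrt (hd0 _)]

end Matrix

open scoped MatrixOrder in
theorem nuclearNorm_eq_trace_sqrt {m n : Type*} [Fintype m] [Fintype n] [DecidableEq n]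
    (A : Matrix m n ℝ) : nuclearNorm A = (CFC.sqrt (Aᴴ * A)).trace :=
  (posSemidef_conjTranspose_mul_self A).trace_sqrt.symm

/-- For `Y = U_Y Σ_Y V_Yᵀ` of rank `c` with singular values
`μ₁ ≥ … ≥ μ_c > 0`, and `X = U_X Σ_X V_Xᵀ` of rank `c` with fixed singular values
`σ₁ ≥ … ≥ σ_c > 0` and fixed left singular vectors `U_X`, the minimum over
`V_X ∈ St_c(ℝⁿ)` of `‖[Y ; U_X Σ_X V_Xᵀ]‖₊` is attained at `V_X = V_Y` and equals
`∑ i √(μ_i² + σ_i²)`. -/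
theorem nuclearNorm_stack_min_over_stiefel
    {c n : ℕ} (Y : Matrix (Fin c) (Fin n) ℝ)
    (UY : Matrix (Fin c) (Fin c) ℝ) (μ : Fin c → ℝ) (VY : Matrix (Fin n) (Fin c) ℝ)
    (hUY : UYᵀ * UY = 1) (hVY : VYᵀ * VY = 1)
    (hμanti : Antitone μ) (hμpos : ∀ i, 0 < μ i)
    (hSVD : Y = UY * Matrix.diagonal μ * VYᵀ)
    (UX : Matrix (Fin c) (Fin c) ℝ) (σ : Fin c → ℝ)
    (hUX : UXᵀ * UX = 1)
    (hσanti : Antitone σ) (hσpos : ∀ i, 0 < σ i) :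
    (∀ VX : Matrix (Fin n) (Fin c) ℝ, VXᵀ * VX = 1 →
        (∑ i, Real.sqrt (μ i ^ 2 + σ i ^ 2)) ≤
          nuclearNorm (fromRows Y (UX * Matrix.diagonal σ * VXᵀ))) ∧
      nuclearNorm (fromRows Y (UX * Matrix.diagonal σ * VYᵀ)) =
        ∑ i, Real.sqrt (μ i ^ 2 + σ i ^ 2) := by
  have hgram : ∀ VX : Matrix (Fin n) (Fin c) ℝ,
      (fromRows Y (UX * diagonal σ * VXᵀ))ᴴ * fromRows Y (UX * diagonal σ * VXᵀ) =
        VY * diagonal (fun i => μ i ^ 2) * VYᵀ + VX * diagonal (fun i => σ i ^ 2) * VXᵀ :=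
    fun VX => by
      rw [conjTranspose_eq_transpose_of_trivial, transpose_fromRows, fromCols_mul_fromRows, hSVD,
        transpose_mul_self_mul_diagonal_mul_transpose hUY,
        transpose_mul_self_mul_diagonal_mul_transpose hUX]
  have hsq_anti : ∀ {a : Fin c → ℝ}, Antitone a → (∀ i, 0 < a i) → Antitone fun i => a i ^ 2 :=
    fun ha ha0 i j hij => pow_le_pow_left₀ (ha0 j).le (ha hij) 2
  refine ⟨fun VX hVX => ?_, ?_⟩
  · exact (isHermitian_conjTranspose_mul_self _).sum_sqrt_add_le_sum_sqrt_eigenvalues hVY hVX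
      (hsq_anti hμanti hμpos) (hsq_anti hσanti hσpos) (fun _ => sq_nonneg _)
      (fun _ => sq_nonneg _) (hgram VX)
  · rw [nuclearNorm_eq_trace_sqrt, hgram, ← Matrix.add_mul, ← Matrix.mul_add, diagonal_add,
      sqrt_mul_diagonal_mul_transpose hVY fun i => by positivity,
      trace_mul_diagonal_mul_transpose hVY]
end

section
/- For the scalar convex problem min over σ₁ ≥ … ≥ σ_d ≥ 0 of Σ_{i=1}^{c} √(μ_i² + σ_i²) + Σ_{i=c+1}^{d} σ_i − α Σ_{i=1}^{d} σ_i + β σ₁², with μ₁ ≥ … ≥ μ_c > 0, β ∈ (0,1), d ≥ c, and √(max{0, 1 − 4β²μ_c²/c²}) ≤ α < 1, the minimum is attained at σ₁ = … = σ_c = t* and σ_{c+1} = … = σ_d = 0, where t* > 0 is the unique solution of Σ_{i=1}^{c} t/√(μ_i² + t²) = αc − 2βt. -/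
open Finset

lemma sqrt_tangent {μ t s : ℝ} (hμ : 0 < μ) (ht : 0 < t) (hs : 0 ≤ s) :
    Real.sqrt (μ^2 + t^2) + t / Real.sqrt (μ^2 + t^2) * (s - t)
      ≤ Real.sqrt (μ^2 + s^2) := by
  have hq2 : (0:ℝ) < μ^2 + t^2 := by positivity
  have hq : 0 < Real.sqrt (μ^2 + t^2) := Real.sqrt_pos.mpr hq2
  have hqq : Real.sqrt (μ^2 + t^2) ^ 2 = μ^2 + t^2 := Real.sq_sqrt hq2.le
  have key : μ^2 + s*t ≤ Real.sqrt (μ^2 + s^2) * Real.sqrt (μ^2 + t^2) := by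
    rw [← Real.sqrt_mul (by positivity)]
    rw [show ((μ^2 + s^2) * (μ^2 + t^2)) = ((μ^2+s*t)^2 + (μ*(s-t))^2) by ring]
    calc μ^2 + s*t = Real.sqrt ((μ^2+s*t)^2) := (Real.sqrt_sq (by positivity)).symm
    _ ≤ _ := Real.sqrt_le_sqrt (by nlinarith [sq_nonneg (μ*(s-t))])
  rw [← sub_nonneg]
  have expand : Real.sqrt (μ^2 + s^2) - (Real.sqrt (μ^2 + t^2) + t / Real.sqrt (μ^2 + t^2) * (s - t))
      = (Real.sqrt (μ^2 + s^2) * Real.sqrt (μ^2 + t^2) - (μ^2 + s*t)) / Real.sqrt (μ^2 + t^2) := by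
    field_simp
    nlinarith [hqq]
  rw [expand]
  exact div_nonneg (by linarith [key]) hq.le

set_option maxHeartbeats 1600000 in
/-- Scalar reduction. For `μ₁ ≥ … ≥ μ_c > 0`, `β ∈ (0,1)`, `d ≥ c`
and `√(max{0, 1 − 4β²μ_c²/c²}) ≤ α < 1`, the convex problem
`min_{σ₁ ≥ … ≥ σ_d ≥ 0} ∑_{i≤c} √(μᵢ² + σᵢ²) + ∑_{i>c} σᵢ − α ∑ᵢ σᵢ + β σ₁²`
is attained at `σ₁ = … = σ_c = t*`, `σ_{c+1} = … = σ_d = 0`, where `t* > 0` is the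
unique solution of `∑ᵢ t/√(μᵢ² + t²) = αc − 2βt`. -/
theorem scalar_reduction_minimizer
    {c d : ℕ} (hc : 0 < c) (hcd : c ≤ d)
    (μ : Fin c → ℝ) (hμanti : Antitone μ) (hμpos : ∀ i, 0 < μ i)
    (α β : ℝ) (hβ0 : 0 < β) (hβ1 : β < 1) (hα1 : α < 1)
    (hα0 : Real.sqrt (max 0 (1 - 4 * β ^ 2 * μ ⟨c - 1, Nat.sub_lt hc one_pos⟩ ^ 2
        / (c : ℝ) ^ 2)) ≤ α)
    (t : ℝ) (ht : 0 < t)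
    (hteq : ∑ i, t / Real.sqrt (μ i ^ 2 + t ^ 2) = α * (c : ℝ) - 2 * β * t) :
    let F : (Fin d → ℝ) → ℝ := fun σ =>
      (∑ i : Fin c, Real.sqrt (μ i ^ 2 + σ (Fin.castLE hcd i) ^ 2)) +
        (∑ i : Fin d, if c ≤ (i : ℕ) then σ i else 0) -
        α * ∑ i : Fin d, σ i + β * σ ⟨0, lt_of_lt_of_le hc hcd⟩ ^ 2
    let σstar : Fin d → ℝ := fun i => if (i : ℕ) < c then t else 0
    Antitone σstar ∧ (∀ i, 0 ≤ σstar i) ∧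
      ∀ σ : Fin d → ℝ, Antitone σ → (∀ i, 0 ≤ σ i) → F σstar ≤ F σ := by
  intro F σstar
  -- basic facts
  have hα_nn : 0 ≤ α := le_trans (Real.sqrt_nonneg _) hα0
  set μl : ℝ := μ ⟨c - 1, Nat.sub_lt hc one_pos⟩ with hμl
  have hμl_pos : 0 < μl := hμpos _
  have hc' : (0:ℝ) < (c:ℝ) := by exact_mod_cast hc
  -- α² ≥ 1 - 4β²μl²/c²
  have hα_sq : 1 - 4 * β ^ 2 * μl ^ 2 / (c:ℝ) ^ 2 ≤ α ^ 2 := by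
    have h1 : max 0 (1 - 4 * β ^ 2 * μl ^ 2 / (c:ℝ) ^ 2) ≤ α ^ 2 := by
      have := Real.sq_sqrt (le_max_left (0:ℝ) (1 - 4 * β ^ 2 * μl ^ 2 / (c:ℝ) ^ 2))
      nlinarith [Real.sqrt_nonneg (max 0 (1 - 4 * β ^ 2 * μl ^ 2 / (c:ℝ) ^ 2)), hα0]
    exact le_trans (le_max_right _ _) h1
  -- each summand a i := t / sqrt (μ i ^2 + t^2)
  have hqpos : ∀ i : Fin c, 0 < Real.sqrt (μ i ^ 2 + t ^ 2) :=
    fun i => Real.sqrt_pos.mpr (by positivity)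
  have hapos : ∀ i : Fin c, 0 < t / Real.sqrt (μ i ^ 2 + t ^ 2) :=
    fun i => div_pos ht (hqpos i)
  -- 2βt ≤ αc
  have htb : 2 * β * t ≤ α * c := by
    have : 0 ≤ ∑ i, t / Real.sqrt (μ i ^ 2 + t ^ 2) :=
      Finset.sum_nonneg fun i _ => (hapos i).le
    linarith [hteq ▸ this]
  -- key bound : a i ≤ α
  have haα : ∀ i : Fin c, t / Real.sqrt (μ i ^ 2 + t ^ 2) ≤ α := by
    intro i
    have hμi : μl ≤ μ i := hμanti (by simp [Fin.le_def]; omega)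
    -- t^2 (1 - α^2) ≤ α^2 μl^2
    have h1 : t ^ 2 * (1 - α ^ 2) ≤ α ^ 2 * μl ^ 2 := by
      have h2 : t ^ 2 ≤ α ^ 2 * (c:ℝ) ^ 2 / (4 * β ^ 2) := by
        rw [le_div_iff₀ (by positivity)]
        nlinarith [mul_nonneg (sub_nonneg.mpr htb)
          (add_nonneg (mul_nonneg hα_nn hc'.le) (by positivity : (0:ℝ) ≤ 2*β*t))]
      have h3 : 1 - α ^ 2 ≤ 4 * β ^ 2 * μl ^ 2 / (c:ℝ) ^ 2 := by linarith
      calc t ^ 2 * (1 - α ^ 2) ≤ (α ^ 2 * (c:ℝ) ^ 2 / (4 * β ^ 2)) * (4 * β ^ 2 * μl ^ 2 / (c:ℝ) ^ 2) := by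
            apply mul_le_mul h2 h3 (by nlinarith) (by positivity)
      _ = α ^ 2 * μl ^ 2 := by field_simp
    -- hence t ≤ α * sqrt (μ i^2 + t^2)
    rw [div_le_iff₀ (hqpos i)]
    have h4 : t ^ 2 ≤ α ^ 2 * (μ i ^ 2 + t ^ 2) := by
      nlinarith [h1, sq_nonneg α, mul_le_mul hμi hμi hμl_pos.le (hμl_pos.le.trans hμi)]
    nlinarith [hqpos i, Real.sq_sqrt (show (0:ℝ) ≤ μ i ^ 2 + t ^ 2 by positivity),
      mul_nonneg hα_nn (hqpos i).le]
  -- prove the three parts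
  refine ⟨?_, ?_, ?_⟩
  · intro i j hij
    simp only [σstar]
    have hij' : (i:ℕ) ≤ (j:ℕ) := hij
    split_ifs with hj hi hi
    · exact le_refl t
    · omega
    · exact ht.le
    · exact le_refl 0
  · intro i
    simp only [σstar]
    split_ifs
    · exact ht.le
    · exact le_refl 0
  · intro σ hanti hσ0
    -- abbreviations
    set s0 : ℝ := σ ⟨0, lt_of_lt_of_le hc hcd⟩ with hs0def
    set q : Fin c → ℝ := fun i => Real.sqrt (μ i ^ 2 + t ^ 2) with hqdef
    set a : Fin c → ℝ := fun i => t / Real.sqrt (μ i ^ 2 + t ^ 2) with hadef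
    set sc : Fin c → ℝ := fun i => σ (Fin.castLE hcd i) with hscdef
    -- natural-number indexed version of σ
    set g : ℕ → ℝ := fun n => if h : n < d then σ ⟨n, h⟩ else 0 with hgdef
    have hgval : ∀ i : Fin d, g ↑i = σ i := fun i => by
      simp only [g]; rw [dif_pos i.isLt]
    -- value of F at σstar
    have hFstar : F σstar = (∑ i : Fin c, q i) - α * ((c:ℝ) * t) + β * t ^ 2 := by
      have c1 : ∑ i : Fin c, Real.sqrt (μ i ^ 2 + σstar (Fin.castLE hcd i) ^ 2)
          = ∑ i : Fin c, q i :=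
        Finset.sum_congr rfl fun i _ => by simp [σstar, q, i.isLt]
      have c2 : ∑ i : Fin d, (if c ≤ (i:ℕ) then σstar i else 0) = 0 :=
        Finset.sum_eq_zero fun i _ => by
          by_cases h : c ≤ (i:ℕ)
          · rw [if_pos h]; simp only [σstar]; rw [if_neg (by omega)]
          · rw [if_neg h]
      have c3 : ∑ i : Fin d, σstar i = (c:ℝ) * t := by
        have e1 : ∑ i : Fin d, σstar i
            = ∑ n ∈ Finset.range d, (fun n => if n < c then t else 0) n := by
          rw [← Fin.sum_univ_eq_sum_range (fun n => if n < c then t else 0) d]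
        rw [e1, ← Finset.sum_subset (Finset.range_subset_range.mpr hcd)
          (fun x _ hxc => if_neg (by simp at hxc; omega))]
        rw [Finset.sum_congr rfl (fun x hx => if_pos (Finset.mem_range.mp hx)),
          Finset.sum_const, Finset.card_range, nsmul_eq_mul]
      have c4 : σstar ⟨0, lt_of_lt_of_le hc hcd⟩ = t := by
        simp only [σstar]; rw [if_pos hc]
      simp only [F, c1, c2, c3, c4, add_zero]
    -- split of the full sum of σ
    have hsplit : ∑ i : Fin d, σ i
        = (∑ i : Fin c, sc i) + ∑ i : Fin d, (if c ≤ (i:ℕ) then σ i else 0) := by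
      have e1 : ∑ i : Fin d, σ i = ∑ n ∈ Finset.range d, g n := by
        rw [← Fin.sum_univ_eq_sum_range g d]
        exact (Finset.sum_congr rfl fun i _ => (hgval i).symm)
      have e2 : ∑ n ∈ Finset.range d, g n
          = (∑ n ∈ Finset.range d, (if n < c then g n else 0))
            + ∑ n ∈ Finset.range d, (if c ≤ n then g n else 0) := by
        rw [← Finset.sum_add_distrib]
        refine Finset.sum_congr rfl fun n _ => ?_
        by_cases h : n < c
        · rw [if_pos h, if_neg (by omega), add_zero]
        · rw [if_neg h, if_pos (by omega), zero_add]
      have e3 : ∑ n ∈ Finset.range d, (if n < c then g n else 0)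
          = ∑ i : Fin c, sc i := by
        rw [← Finset.sum_subset (Finset.range_subset_range.mpr hcd)
          (fun x _ hxc => if_neg (by simp at hxc; omega)),
          Finset.sum_congr rfl (fun x hx => if_pos (Finset.mem_range.mp hx)),
          ← Fin.sum_univ_eq_sum_range g c]
        refine Finset.sum_congr rfl fun i _ => ?_
        simp only [g, sc]
        rw [dif_pos (lt_of_lt_of_le i.isLt hcd)]
        rfl
      have e4 : ∑ n ∈ Finset.range d, (if c ≤ n then g n else 0)
          = ∑ i : Fin d, (if c ≤ (i:ℕ) then σ i else 0) := by
        rw [← Fin.sum_univ_eq_sum_range (fun n => if c ≤ n then g n else 0) d]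
        exact Finset.sum_congr rfl fun i _ => by rw [hgval i]
      rw [e1, e2, e3, e4]
    -- tangent line bound
    have hG1 : (∑ i : Fin c, q i) + ∑ i : Fin c, a i * (sc i - t)
        ≤ ∑ i : Fin c, Real.sqrt (μ i ^ 2 + sc i ^ 2) := by
      rw [← Finset.sum_add_distrib]
      exact Finset.sum_le_sum fun i _ => sqrt_tangent (hμpos i) ht (hσ0 _)
    -- monotonicity facts
    have hscle : ∀ i : Fin c, sc i ≤ s0 := fun i =>
      hanti (show (⟨0, lt_of_lt_of_le hc hcd⟩ : Fin d) ≤ Fin.castLE hcd i by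
        simp [Fin.le_def])
    have hN : 0 ≤ ∑ i : Fin c, (a i - α) * (sc i - s0) :=
      Finset.sum_nonneg fun i _ => by
        have h1 : a i - α ≤ 0 := sub_nonpos.mpr (haα i)
        have h2 : sc i - s0 ≤ 0 := sub_nonpos.mpr (hscle i)
        calc (0:ℝ) ≤ (-(a i - α)) * (-(sc i - s0)) :=
              mul_nonneg (by linarith) (by linarith)
        _ = (a i - α) * (sc i - s0) := by ring
    have hTail : 0 ≤ ∑ i : Fin d, (if c ≤ (i:ℕ) then σ i else 0) :=
      Finset.sum_nonneg fun i _ => by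
        by_cases h : c ≤ (i:ℕ)
        · rw [if_pos h]; exact hσ0 i
        · rw [if_neg h]
    -- rearrangement
    have hG3 : ∑ i : Fin c, a i * (sc i - t)
        = (∑ i : Fin c, (a i - α) * (sc i - s0))
          + (s0 - t) * (α * (c:ℝ) - 2 * β * t)
          + α * (∑ i : Fin c, sc i) - (c:ℝ) * (α * s0) := by
      have e0 : ∑ i : Fin c, a i = α * (c:ℝ) - 2 * β * t := hteq
      rw [← e0]
      rw [Finset.sum_congr rfl (fun i (_ : i ∈ Finset.univ) =>
        (show a i * (sc i - t)
          = (a i - α) * (sc i - s0) + (s0 - t) * a i + α * sc i - α * s0 by ring))]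
      simp only [Finset.sum_add_distrib, Finset.sum_sub_distrib, ← Finset.mul_sum,
        Finset.sum_const, Finset.card_univ, Fintype.card_fin, nsmul_eq_mul]
      ring
    -- put everything together
    have hFσ : F σ = (∑ i : Fin c, Real.sqrt (μ i ^ 2 + sc i ^ 2))
        + (∑ i : Fin d, (if c ≤ (i:ℕ) then σ i else 0))
        - α * ∑ i : Fin d, σ i + β * s0 ^ 2 := rfl
    rw [hFstar, hFσ, hsplit]
    nlinarith [hG1, hG3, hN, hTail, mul_nonneg (sub_nonneg.mpr hα1.le) hTail,
      mul_nonneg hβ0.le (sq_nonneg (s0 - t))]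
end

section
/- Let Y ∈ {0,1}^{c×n} have rank c with SVD Y = U_Y Σ_Y V_Yᵀ, where V_Y ∈ St_c(ℝⁿ) has rows v₁ᵀ, …, v_nᵀ. Let I ⊆ [n] be a maximal index set such that for distinct i, j ∈ I, the columns y_i ≠ y_j. If rank Y = |I|, then: (1) for all i, j ∈ [n], y_i = y_j if and only if v_i = v_j; and (2) the vectors {√|J_i| · v_i}_{i∈I}, where J_i = {j ∈ [n] : y_j = y_i}, form an orthonormal basis for ℝ^c; in particular {v_i}_{i∈I} is an orthogonal basis of ℝ^c. -/
/-!
Write `Y = A Vᵀ` with `A = U_Y Σ_Y`. Since `rank Y = c`, the square matrix `A` is invertible, so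
the column `y_i = A v_i` determines the row `v_i`: the rows of `V` are constant on every class
`J_i`. Grouping the terms of `Σ_l v_l v_lᵀ = Vᵀ V = 1` by classes gives `W Wᵀ = 1` for the
`c × |I|` matrix `W` with columns `√|J_i| v_i`. As `|I| = c`, `W` is square, hence also
`Wᵀ W = 1`, and its columns span `ℝ^c`.
-/

open Matrix Finset

namespace Matrix

theorem isUnit_of_rank_mul_eq_card {K m n : Type*} [Field K] [Fintype m] [DecidableEq m]
    [Fintype n] {A : Matrix m m K} {B : Matrix m n K} (h : (A * B).rank = Fintype.card m) :
    IsUnit A := by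
  have hA : A.rank = Fintype.card m := le_antisymm A.rank_le_card_width (h ▸ A.rank_mul_le_left B)
  rw [← mulVec_surjective_iff_isUnit, ← coe_mulVecLin, ← LinearMap.range_eq_top]
  exact Submodule.eq_top_of_finrank_eq (by rw [← rank, hA, Module.finrank_fintype_fun_eq_card])

theorem transpose_mul_transpose_row_eq_iff {K m n : Type*} [Field K] [Fintype m]
    [DecidableEq m] {A : Matrix m m K} (hA : IsUnit A) (V : Matrix n m K) (i j : n) :
    (A * Vᵀ)ᵀ i = (A * Vᵀ)ᵀ j ↔ V i = V j := by
  simp only [transpose_mul, transpose_transpose, mul_apply_eq_vecMul, vecMul_transpose]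
  exact (mulVec_injective_iff_isUnit.2 hA).eq_iff

theorem span_range_col_eq_top_of_mul_eq_one {K m ι : Type*} [Field K] [Fintype m] [DecidableEq m]
    [Fintype ι] {W : Matrix m ι K} {B : Matrix ι m K} (h : W * B = 1) :
    Submodule.span K (Set.range W.col) = ⊤ := by
  rw [← range_mulVecLin, LinearMap.range_eq_top]
  exact fun x => ⟨B *ᵥ x, by simp [mulVec_mulVec, h]⟩

end Matrix

theorem Finset.sum_eq_sum_card_fiber_nsmul {ι β M : Type*} [Fintype ι] [DecidableEq β]
    [AddCommMonoid M] {φ : ι → β} {f : ι → M} (hf : ∀ l l', φ l = φ l' → f l = f l')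
    {I : Finset ι} (hinj : Set.InjOn φ I) (hcover : ∀ l, ∃ i ∈ I, φ l = φ i) :
    ∑ l, f l = ∑ i ∈ I, #{l | φ l = φ i} • f i :=
  calc ∑ l, f l = ∑ b ∈ I.image φ, ∑ l with φ l = b, f l :=
        (sum_fiberwise_of_maps_to (fun l _ => by
          obtain ⟨i, hi, hl⟩ := hcover l
          exact hl ▸ mem_image_of_mem φ hi) f).symm
    _ = ∑ i ∈ I, ∑ l with φ l = φ i, f l := sum_image hinj
    _ = ∑ i ∈ I, #{l | φ l = φ i} • f i :=
        sum_congr rfl fun i _ => sum_eq_card_nsmul fun l hl => hf l i (mem_filter.1 hl).2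

section FiberScaledCols

variable {n m β : Type*} [Fintype n] [DecidableEq m] [DecidableEq β]

noncomputable def fiberScaledCols (V : Matrix n m ℝ) (φ : n → β) (I : Finset n) :
    Matrix m I ℝ :=
  Matrix.of fun a i => √(#{l | φ l = φ i} : ℝ) * V i a

variable {V : Matrix n m ℝ} {φ : n → β} {I : Finset n}

theorem fiberScaledCols_mul_transpose (hV : Vᵀ * V = 1)
    (hconst : ∀ l l', φ l = φ l' → V l = V l') (hinj : Set.InjOn φ I)
    (hcover : ∀ l, ∃ i ∈ I, φ l = φ i) :
    fiberScaledCols V φ I * (fiberScaledCols V φ I)ᵀ = 1 := by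
  ext a b
  rw [← hV, mul_apply, mul_apply]
  simp only [transpose_apply]
  rw [sum_eq_sum_card_fiber_nsmul (f := fun l => V l a * V l b)
    (fun l l' h => by rw [hconst l l' h]) hinj hcover, ← sum_coe_sort I]
  refine sum_congr rfl fun i _ => ?_
  simp only [fiberScaledCols, of_apply, nsmul_eq_mul]
  rw [mul_mul_mul_comm, Real.mul_self_sqrt (Nat.cast_nonneg _)]

theorem transpose_mul_fiberScaledCols [Fintype m] [DecidableEq n] (hV : Vᵀ * V = 1)
    (hconst : ∀ l l', φ l = φ l' → V l = V l') (hinj : Set.InjOn φ I)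
    (hcover : ∀ l, ∃ i ∈ I, φ l = φ i) (hcard : #I = Fintype.card m) :
    (fiberScaledCols V φ I)ᵀ * fiberScaledCols V φ I = 1 :=
  (mul_eq_one_comm_of_card_eq _ _ _ (by rw [Fintype.card_coe, hcard])).1
    (fiberScaledCols_mul_transpose hV hconst hinj hcover)

theorem dotProduct_sqrt_card_fiber_smul_row [Fintype m] [DecidableEq n] (hV : Vᵀ * V = 1)
    (hconst : ∀ l l', φ l = φ l' → V l = V l') (hinj : Set.InjOn φ I)
    (hcover : ∀ l, ∃ i ∈ I, φ l = φ i) (hcard : #I = Fintype.card m) :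
    ∀ i ∈ I, ∀ j ∈ I,
      (√(#{l | φ l = φ i} : ℝ) • V i) ⬝ᵥ (√(#{l | φ l = φ j} : ℝ) • V j) =
        if i = j then 1 else 0 := by
  intro i hi j hj
  have h := congrFun₂ (transpose_mul_fiberScaledCols hV hconst hinj hcover hcard)
    ⟨i, hi⟩ ⟨j, hj⟩
  simp only [mul_apply, one_apply, Subtype.mk.injEq] at h
  simpa only [dotProduct, Pi.smul_apply, smul_eq_mul, fiberScaledCols, transpose_apply,
    of_apply] using h

theorem span_transversal_rows_eq_top [Fintype m] (hV : Vᵀ * V = 1)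
    (hconst : ∀ l l', φ l = φ l' → V l = V l') (hinj : Set.InjOn φ I)
    (hcover : ∀ l, ∃ i ∈ I, φ l = φ i) :
    Submodule.span ℝ {w | ∃ i ∈ I, w = V i} = ⊤ := by
  have hW := fiberScaledCols_mul_transpose hV hconst hinj hcover
  refine eq_top_iff.2 <| (span_range_col_eq_top_of_mul_eq_one hW).ge.trans <|
    Submodule.span_le.2 <| Set.range_subset_iff.2 fun i => ?_
  have hcol : (fiberScaledCols V φ I).col i = √(#{l | φ l = φ i} : ℝ) • V i := by
    ext a; simp [fiberScaledCols]
  exact hcol ▸ Submodule.smul_mem _ _ (Submodule.subset_span ⟨i, i.2, rfl⟩)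

end FiberScaledCols

open scoped Classical

theorem minterm_orthogonality_general
    {c n : ℕ} (Y : Matrix (Fin c) (Fin n) ℝ)
    (UY : Matrix (Fin c) (Fin c) ℝ) (μ : Fin c → ℝ) (VY : Matrix (Fin n) (Fin c) ℝ)
    (hVY : VYᵀ * VY = 1)
    (hSVD : Y = UY * Matrix.diagonal μ * VYᵀ)
    (hrank : Y.rank = c)
    (I : Finset (Fin n))
    (hdistinct : ∀ i ∈ I, ∀ j ∈ I, i ≠ j → (fun a => Y a i) ≠ (fun a => Y a j))
    (hmaximal : ∀ j : Fin n, ∃ i ∈ I, (fun a => Y a j) = (fun a => Y a i))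
    (hcard : Y.rank = I.card) :
    (∀ i j : Fin n,
        (fun a => Y a i) = (fun a => Y a j) ↔
          (fun a => VY i a) = (fun a => VY j a)) ∧
      (∀ i ∈ I, ∀ j ∈ I,
        (Real.sqrt (Finset.univ.filter fun l => (fun a => Y a l) = fun a => Y a i).card
            • fun a => VY i a) ⬝ᵥ
          (Real.sqrt (Finset.univ.filter fun l => (fun a => Y a l) = fun a => Y a j).card
            • fun a => VY j a) = if i = j then 1 else 0) ∧
      Submodule.span ℝ {w : Fin c → ℝ | ∃ i ∈ I, w = fun a => VY i a} = ⊤ := by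
  have hA : IsUnit (UY * diagonal μ) :=
    isUnit_of_rank_mul_eq_card (B := VYᵀ) (by rw [← hSVD, hrank, Fintype.card_fin])
  have hcols : ∀ i j, Yᵀ i = Yᵀ j ↔ VY i = VY j := by
    subst hSVD
    exact transpose_mul_transpose_row_eq_iff hA VY
  have hconst : ∀ l l', Yᵀ l = Yᵀ l' → VY l = VY l' := fun l l' => (hcols l l').1
  have hinj : Set.InjOn Yᵀ I := fun i hi j hj h => by_contra (hdistinct i hi j hj · h)
  have hIcard : #I = Fintype.card (Fin c) := by rw [Fintype.card_fin, ← hcard, hrank]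
  exact ⟨hcols, dotProduct_sqrt_card_fiber_smul_row hVY hconst hinj hmaximal hIcard,
    span_transversal_rows_eq_top hVY hconst hinj hmaximal⟩

/-- Minterm orthogonality. Let `Y ∈ {0,1}^{c×n}` have rank `c`
with SVD `Y = U_Y Σ_Y V_Yᵀ`, `V_Y ∈ St_c(ℝⁿ)` with rows `v₁ᵀ, …, v_nᵀ`. Let
`I ⊆ [n]` be a maximal index set of pairwise distinct columns. If `rank Y = |I|`
then (1) `y_i = y_j ↔ v_i = v_j`, and (2) the vectors `√|J_i| · v_i` for `i ∈ I`
(`J_i = {j : y_j = y_i}`) form an orthonormal basis of `ℝ^c`; in particular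
`{v_i}_{i∈I}` is an orthogonal basis of `ℝ^c`. -/
theorem minterm_orthogonality
    {c n : ℕ} (Y : Matrix (Fin c) (Fin n) ℝ)
    (hbin : ∀ i j, Y i j = 0 ∨ Y i j = 1)
    (UY : Matrix (Fin c) (Fin c) ℝ) (μ : Fin c → ℝ) (VY : Matrix (Fin n) (Fin c) ℝ)
    (hUY : UYᵀ * UY = 1) (hVY : VYᵀ * VY = 1) (hμpos : ∀ i, 0 < μ i)
    (hSVD : Y = UY * Matrix.diagonal μ * VYᵀ)
    (hrank : Y.rank = c)
    (I : Finset (Fin n))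
    (hdistinct : ∀ i ∈ I, ∀ j ∈ I, i ≠ j → (fun a => Y a i) ≠ (fun a => Y a j))
    (hmaximal : ∀ j : Fin n, ∃ i ∈ I, (fun a => Y a j) = (fun a => Y a i))
    (hcard : Y.rank = I.card) :
    (∀ i j : Fin n,
        (fun a => Y a i) = (fun a => Y a j) ↔
          (fun a => VY i a) = (fun a => VY j a)) ∧
      (∀ i ∈ I, ∀ j ∈ I,
        (Real.sqrt (Finset.univ.filter fun l => (fun a => Y a l) = fun a => Y a i).card
            • fun a => VY i a) ⬝ᵥ
          (Real.sqrt (Finset.univ.filter fun l => (fun a => Y a l) = fun a => Y a j).card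
            • fun a => VY j a) = if i = j then 1 else 0) ∧
      Submodule.span ℝ {w : Fin c → ℝ | ∃ i ∈ I, w = fun a => VY i a} = ⊤ :=
  minterm_orthogonality_general Y UY μ VY hVY hSVD hrank I hdistinct hmaximal hcard
end

section
/- Let V_Y, V_X ∈ St_c(ℝⁿ) with n > c, and let Z ∈ ℝ^{2c×n} be the vertical stacking of V_Yᵀ and V_Xᵀ. Then the multiset of singular values of Z is ⋃_{i=1}^{c} { √(1 + σ_i(V_Yᵀ V_X)), √(1 − σ_i(V_Yᵀ V_X)) }, where σ_i(V_Yᵀ V_X) are the singular values of the c×c matrix V_Yᵀ V_X. -/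
/-!
With `B = V_Yᵀ V_X`, orthonormality of the columns gives `Z Zᵀ = [[1, B], [Bᵀ, 1]]`. Clearing the
lower-left block of its characteristic matrix shows `χ_{Z Zᵀ}(X) = χ_{Bᵀ B}((X - 1)²)`, so every
eigenvalue `σ²` of `Bᵀ B` splits into the two eigenvalues `1 ± σ` of `Z Zᵀ`; the singular values of
`Z` are their square roots.
-/

open Matrix

/-- The singular values of a real matrix, indexed by rows: the square roots of the
eigenvalues of `A * Aᴴ`. -/
noncomputable def singValsRow {m n : Type*} [Fintype m] [Fintype n] [DecidableEq m]
    (A : Matrix m n ℝ) : m → ℝ :=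
  fun i => Real.sqrt ((Matrix.isHermitian_mul_conjTranspose_self A).eigenvalues i)

/-- The singular values of a real matrix, indexed by columns: the square roots of
the eigenvalues of `Aᴴ * A`. -/
noncomputable def singVals {m n : Type*} [Fintype m] [Fintype n] [DecidableEq n]
    (A : Matrix m n ℝ) : n → ℝ :=
  fun i => Real.sqrt ((show (Aᵀ * A).IsHermitian by
    simp [Matrix.IsHermitian, Matrix.conjTranspose_eq_transpose_of_trivial, Matrix.transpose_mul]).eigenvalues i)

open Polynomial

namespace Matrix

variable {n : Type*} [Fintype n] [DecidableEq n]

theorem det_fromBlocks_scalar_of_isRegular {R : Type*} [CommRing R] {a : R} (ha : IsRegular a)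
    (B C : Matrix n n R) :
    det (fromBlocks (scalar n a) B C (scalar n a)) = det (scalar n (a ^ 2) - C * B) := by
  have hS : det (scalar n a) = a ^ Fintype.card n := by simp
  have hLM : fromBlocks 1 0 (-C) (scalar n a) * fromBlocks (scalar n a) B C (scalar n a) =
      fromBlocks (scalar n a) B 0 (scalar n (a ^ 2) - C * B) := by
    rw [fromBlocks_multiply, (scalar_commute a (Commute.all a) C).eq, map_pow]
    simp [sq, sub_eq_neg_add]
  have hdet := congrArg det hLM
  rw [det_mul, det_fromBlocks_zero₁₂, det_fromBlocks_zero₂₁, hS, det_one, one_mul] at hdet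
  exact (ha.pow _).left hdet

theorem charpoly_comp {R : Type*} [CommRing R] (M : Matrix n n R) (p : R[X]) :
    M.charpoly.comp p = det (scalar n p - M.map C) := by
  rw [charpoly, ← coe_compRingHom_apply, RingHom.map_det]
  congr 1
  ext i j
  obtain rfl | hij := eq_or_ne i j <;> simp [charmatrix, *]

theorem charpoly_fromBlocks_zero₁₁_zero₂₂ {R : Type*} [CommRing R] (B C : Matrix n n R) :
    (fromBlocks 0 B C 0).charpoly = (C * B).charpoly.comp (X ^ 2) := by
  rw [charpoly, charmatrix_fromBlocks, charmatrix_zero,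
    det_fromBlocks_scalar_of_isRegular isRegular_X, charpoly_comp, neg_mul_neg, Matrix.map_mul]

theorem charpoly_fromBlocks_one₁₁_one₂₂ {R : Type*} [CommRing R] (B C : Matrix n n R) :
    (fromBlocks 1 B C 1).charpoly = (C * B).charpoly.comp ((X - 1) ^ 2) := by
  have hshift : fromBlocks 1 B C 1 = fromBlocks 0 B C 0 - scalar (n ⊕ n) (-1 : R) := by
    rw [map_neg, map_one, sub_neg_eq_add, ← fromBlocks_one, fromBlocks_add]
    simp
  rw [hshift, charpoly_sub_scalar, charpoly_fromBlocks_zero₁₁_zero₂₂, comp_assoc]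
  simp [sub_eq_add_neg]

end Matrix

theorem Polynomial.roots_multiset_prod_X_sub_C_comp_X_sub_one_sq {s : Multiset ℝ}
    (hs : ∀ μ ∈ s, 0 ≤ μ) :
    ((s.map fun μ => X - C μ).prod.comp ((X - 1) ^ 2)).roots =
      s.map (fun μ => 1 + √μ) + s.map (fun μ => 1 - √μ) := by
  have hfactor : ∀ μ ∈ s,
      (X - C μ).comp ((X - 1) ^ 2) = (X - C (1 + √μ)) * (X - C (1 - √μ)) := by
    intro μ hμ
    have hC : C μ = C √μ * C √μ := by rw [← C_mul, Real.mul_self_sqrt (hs μ hμ)]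
    rw [sub_comp, X_comp, C_comp, hC, C_add, C_sub, C_1]
    ring
  have hprod : (s.map fun μ => X - C μ).prod.comp ((X - 1) ^ 2) =
      ((s.map (fun μ => 1 + √μ) + s.map (fun μ => 1 - √μ)).map fun a => X - C a).prod := by
    rw [multiset_prod_comp, Multiset.map_map, Multiset.map_add, Multiset.prod_add,
      Multiset.map_map, Multiset.map_map, ← Multiset.prod_map_mul]
    exact congrArg _ (Multiset.map_congr rfl hfactor)
  rw [hprod, roots_multiset_prod_X_sub_C]

theorem Matrix.roots_charpoly_fromBlocks_one_transpose {n : Type*} [Fintype n] [DecidableEq n]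
    (B : Matrix n n ℝ) :
    (fromBlocks 1 B Bᵀ 1).charpoly.roots =
      Finset.univ.val.map (fun i => 1 + singVals B i) +
        Finset.univ.val.map (fun i => 1 - singVals B i) := by
  have hS : (Bᵀ * B).IsHermitian := isHermitian_conjTranspose_mul_self B
  have hprod : (Bᵀ * B).charpoly =
      ((Finset.univ.val.map hS.eigenvalues).map fun μ => X - C μ).prod := by
    rw [hS.charpoly_eq, Finset.prod_eq_multiset_prod, Multiset.map_map]
    simp
  rw [charpoly_fromBlocks_one₁₁_one₂₂, hprod, roots_multiset_prod_X_sub_C_comp_X_sub_one_sq,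
    Multiset.map_map, Multiset.map_map]
  · rfl
  · simpa using eigenvalues_conjTranspose_mul_self_nonneg B

theorem map_singValsRow_eq_map_sqrt_roots_charpoly {m n : Type*} [Fintype m] [Fintype n]
    [DecidableEq m] (A : Matrix m n ℝ) :
    Finset.univ.val.map (singValsRow A) = (A * Aᴴ).charpoly.roots.map Real.sqrt := by
  rw [(isHermitian_mul_conjTranspose_self A).roots_charpoly_eq_eigenvalues, Multiset.map_map,
    RCLike.ofReal_real_eq_id]
  rfl

theorem singular_values_stacked_stiefel_general
    {c n : ℕ}
    (VY VX : Matrix (Fin n) (Fin c) ℝ)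
    (hVY : VYᵀ * VY = 1) (hVX : VXᵀ * VX = 1) :
    Multiset.map (singValsRow (fromRows VYᵀ VXᵀ)) Finset.univ.val =
      Multiset.map (fun i => Real.sqrt (1 + singVals (VYᵀ * VX) i))
          Finset.univ.val +
        Multiset.map (fun i => Real.sqrt (1 - singVals (VYᵀ * VX) i))
          Finset.univ.val := by
  have hgram : fromRows VYᵀ VXᵀ * (fromRows VYᵀ VXᵀ)ᴴ =
      fromBlocks 1 (VYᵀ * VX) (VYᵀ * VX)ᵀ 1 := by
    rw [conjTranspose_eq_transpose_of_trivial, transpose_fromRows, fromRows_mul_fromCols,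
      transpose_transpose, transpose_transpose, hVY, hVX, transpose_mul, transpose_transpose]
  rw [map_singValsRow_eq_map_sqrt_roots_charpoly, hgram, roots_charpoly_fromBlocks_one_transpose,
    Multiset.map_add, Multiset.map_map, Multiset.map_map]
  rfl

/-- For `V_Y, V_X ∈ St_c(ℝⁿ)` with `n > c`, the multiset of
singular values of the stacked matrix `Z = [V_Yᵀ ; V_Xᵀ] ∈ ℝ^{2c×n}` is
`⋃ᵢ { √(1 + σᵢ(V_YᵀV_X)), √(1 − σᵢ(V_YᵀV_X)) }`. -/
theorem singular_values_stacked_stiefel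
    {c n : ℕ} (hcn : c < n)
    (VY VX : Matrix (Fin n) (Fin c) ℝ)
    (hVY : VYᵀ * VY = 1) (hVX : VXᵀ * VX = 1) :
    Multiset.map (singValsRow (fromRows VYᵀ VXᵀ)) Finset.univ.val =
      Multiset.map (fun i => Real.sqrt (1 + singVals (VYᵀ * VX) i))
          Finset.univ.val +
        Multiset.map (fun i => Real.sqrt (1 - singVals (VYᵀ * VX) i))
          Finset.univ.val :=
  singular_values_stacked_stiefel_general VY VX hVY hVX
end
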